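/- arXiv:2504.13342 — 3 statements merged into one kernel-verified Lean document; each statement's English description precedes it below -/
import Mathlib

section
/- Let C ⊆ Z_q^n be a code with minimum Hamming distance d, n ≥ t, and suppose at most t erasures occur in each channel with all N output words distinct. If V_2(n-a-1, t-a-1) + 1 ≤ N ≤ V_2(n-a, t-a) for some integer a ∈ [1, t-1], then the maximum list size equals A_q(a, d), the maximum size of a q-ary code of length a with minimum distance d (where A_q(a,d) = 1 when d > a). -/
/-!
Let `I` be the set of coordinates erased in every received word. A received word is determined
by its erasure set, which contains `I` and has at most `t` elements, so `|I| > a` would allow at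
most `V_2(n-a-1, t-a-1)` distinct outputs. Hence `|I| ≤ a`: every codeword consistent with all
outputs agrees with `x` off a fixed set of `a` coordinates, and restriction to those coordinates
embeds the list isometrically into a code of length `a`.

Conversely, erasing `N` supersets of an `a`-set `I`, among them `I` itself, leaves exactly the
words agreeing with `x` off `I` consistent. Padding an optimal code of length `a`, modified to
have minimum distance exactly `d`, gives a list of size `A_q(a,d)`; when `d > a`, a pair of words
at distance `d` that also differ outside `I` gives a list of size `1`.
-/

open Finset

/-- `V_2(m,r) = Σ_{i=0}^{r} C(m,i)`. -/
def V2 (m r : ℕ) : ℕ := ∑ i ∈ Finset.range (r + 1), m.choose i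

/-- `y` (a word over `Z_q ∪ {*}`) is obtainable from `x ∈ (Z_q)^n` by at most `t` erasures. -/
def ErasureOutput (n q t : ℕ) (x : Fin n → Fin q) (y : Fin n → Option (Fin q)) : Prop :=
  (∀ i, y i = some (x i) ∨ y i = none) ∧
    (Finset.univ.filter (fun i => y i = none)).card ≤ t

instance (n q t : ℕ) (x : Fin n → Fin q) (y : Fin n → Option (Fin q)) :
    Decidable (ErasureOutput n q t x y) := by
  unfold ErasureOutput; infer_instance

/-- A code of length `m` over `Z_q` has minimum Hamming distance (exactly) `d`. -/
def HasMinDist {m q : ℕ} (C : Finset (Fin m → Fin q)) (d : ℕ) : Prop :=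
  (∀ c1 ∈ C, ∀ c2 ∈ C, c1 ≠ c2 → d ≤ hammingDist c1 c2) ∧
    (∃ c1 ∈ C, ∃ c2 ∈ C, c1 ≠ c2 ∧ hammingDist c1 c2 = d)

/-- `A_q(m,d)`: the maximum size of a code in `(Z_q)^m` with minimum distance `d`
(where any code with fewer than two codewords has minimum distance at least `d` vacuously,
so `A_q(m,d) = 1` when `d > m`). -/
noncomputable def Aq (q m d : ℕ) : ℕ :=
  sSup {k : ℕ | ∃ C : Finset (Fin m → Fin q),
    (∀ c1 ∈ C, ∀ c2 ∈ C, c1 ≠ c2 → d ≤ hammingDist c1 c2) ∧ C.card = k}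

section Hamming

theorem exists_ne_iff_mem {ι β : Type*} [Nontrivial β] [DecidableEq ι] (x : ι → β)
    (J : Finset ι) : ∃ w : ι → β, ∀ i, x i ≠ w i ↔ i ∈ J := by
  choose y hy using fun i => exists_ne (x i)
  refine ⟨fun i => if i ∈ J then y i else x i, fun i => ?_⟩
  by_cases hi : i ∈ J <;> simp [hi, (hy i).symm]

variable {ι κ β : Type*} [Fintype ι] [Fintype κ] [DecidableEq β]

def HammingSeparated (C : Finset (ι → β)) (d : ℕ) : Prop :=
  ∀ c₁ ∈ C, ∀ c₂ ∈ C, c₁ ≠ c₂ → d ≤ hammingDist c₁ c₂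

theorem HammingSeparated.mono {C D : Finset (ι → β)} {d : ℕ} (h : HammingSeparated C d)
    (hDC : D ⊆ C) : HammingSeparated D d :=
  fun c₁ h₁ c₂ h₂ => h c₁ (hDC h₁) c₂ (hDC h₂)

theorem HammingSeparated.image {C : Finset (ι → β)} {d : ℕ} (h : HammingSeparated C d)
    {φ : (ι → β) → (κ → β)}
    (hφ : ∀ u ∈ C, ∀ v ∈ C, hammingDist (φ u) (φ v) = hammingDist u v) :
    HammingSeparated (C.image φ) d := by
  simp only [HammingSeparated, mem_image]
  rintro _ ⟨u, hu, rfl⟩ _ ⟨v, hv, rfl⟩ hne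
  exact hφ u hu v hv ▸ h u hu v hv (by rintro rfl; exact hne rfl)

theorem card_image_of_hammingDist_eq {C : Finset (ι → β)} {φ : (ι → β) → (κ → β)}
    (hφ : ∀ u ∈ C, ∀ v ∈ C, hammingDist (φ u) (φ v) = hammingDist u v) :
    #(C.image φ) = #C :=
  card_image_of_injOn fun u hu v hv huv => by
    simpa [huv] using (hφ u hu v hv).symm

theorem hammingSeparated_pair {u v : ι → β} {d : ℕ} (h : d ≤ hammingDist u v) :
    HammingSeparated {u, v} d := by
  simp only [HammingSeparated, mem_insert, mem_singleton]
  rintro _ (rfl | rfl) _ (rfl | rfl) hne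
  · exact absurd rfl hne
  · exact h
  · rwa [hammingDist_comm]
  · exact absurd rfl hne

theorem hammingDist_comp_of_eqOn_compl_range {f : ι → κ} (hf : f.Injective) {u v : κ → β}
    (huv : ∀ k, k ∉ Set.range f → u k = v k) :
    hammingDist (u ∘ f) (v ∘ f) = hammingDist u v := by
  refine card_bij (fun i _ => f i) (by simp) (fun _ _ _ _ h => hf h) ?_
  intro k hk
  obtain ⟨i, rfl⟩ : k ∈ Set.range f := by
    by_contra hkf
    exact (mem_filter.mp hk).2 (huv k hkf)
  exact ⟨i, by simpa using hk, rfl⟩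

theorem hammingDist_extend {f : ι → κ} (hf : f.Injective) (u v : ι → β) (e : κ → β) :
    hammingDist (f.extend u e) (f.extend v e) = hammingDist u v := by
  rw [← hammingDist_comp_of_eqOn_compl_range hf, Function.extend_comp hf,
    Function.extend_comp hf]
  intro k hk
  rw [Function.extend_apply' _ _ _ hk, Function.extend_apply' _ _ _ hk]

theorem hammingDist_eq_card_of_ne_iff [DecidableEq ι] {u v : ι → β} {J : Finset ι}
    (h : ∀ i, u i ≠ v i ↔ i ∈ J) : hammingDist u v = #J := by
  unfold hammingDist
  congr 1
  ext i
  simp [h]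

theorem exists_hammingDist_eq_of_le [DecidableEq ι] {u v : ι → β} {d : ℕ}
    (h : d ≤ hammingDist u v) :
    ∃ w : ι → β, hammingDist u w = d ∧ hammingDist w v = hammingDist u v - d := by
  obtain ⟨K, hKΔ, hK⟩ := exists_subset_card_eq h
  have hΔ : ∀ i, i ∈ K → u i ≠ v i := fun i hi => (mem_filter.mp (hKΔ hi)).2
  refine ⟨fun i => if i ∈ K then v i else u i, ?_, ?_⟩
  · rw [← hK]
    refine hammingDist_eq_card_of_ne_iff fun i => ?_
    by_cases hi : i ∈ K <;> simp [hi, hΔ]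
  · rw [← hK, show hammingDist u v = #{i | u i ≠ v i} from rfl,
      ← card_sdiff_of_subset hKΔ]
    refine hammingDist_eq_card_of_ne_iff fun i => ?_
    by_cases hi : i ∈ K <;> simp [hi]

end Hamming

section Aq

variable {q m d : ℕ}

theorem bddAbove_card_hammingSeparated :
    BddAbove {k : ℕ | ∃ C : Finset (Fin m → Fin q), HammingSeparated C d ∧ #C = k} :=
  ⟨Fintype.card (Fin m → Fin q), by rintro k ⟨C, -, rfl⟩; exact card_le_univ C⟩

theorem card_le_Aq {C : Finset (Fin m → Fin q)} (h : HammingSeparated C d) :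
    #C ≤ Aq q m d :=
  le_csSup bddAbove_card_hammingSeparated ⟨C, h, rfl⟩

theorem exists_card_eq_Aq :
    ∃ C : Finset (Fin m → Fin q), HammingSeparated C d ∧ #C = Aq q m d :=
  Nat.sSup_mem (s := {k | ∃ C : Finset (Fin m → Fin q), HammingSeparated C d ∧ #C = k})
    ⟨0, ∅, by simp [HammingSeparated]⟩ bddAbove_card_hammingSeparated

theorem Aq_eq_one_of_lt (hq : 0 < q) (hmd : m < d) : Aq q m d = 1 := by
  obtain ⟨C, hC, hCcard⟩ := exists_card_eq_Aq (q := q) (m := m) (d := d)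
  apply le_antisymm
  · rw [← hCcard]
    refine card_le_one.mpr fun u hu v hv => ?_
    by_contra huv
    have := hammingDist_le_card_fintype (x := u) (y := v)
    have := hC u hu v hv huv
    simp only [Fintype.card_fin] at *
    omega
  · have : HammingSeparated {fun _ : Fin m => (⟨0, hq⟩ : Fin q)} d := by
      simp [HammingSeparated]
    simpa using card_le_Aq this

theorem two_le_Aq (hq : 2 ≤ q) (hd : 1 ≤ d) (hdm : d ≤ m) : 2 ≤ Aq q m d := by
  have : Nontrivial (Fin q) := Fin.nontrivial_iff_two_le.mpr hq
  obtain ⟨J, -, hJ⟩ := exists_subset_card_eq (s := (univ : Finset (Fin m))) (by simpa using hdm)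
  obtain ⟨w, hw⟩ := exists_ne_iff_mem (fun _ => (⟨0, by omega⟩ : Fin q)) J
  have hdist := hammingDist_eq_card_of_ne_iff hw
  have hne : (fun _ => (⟨0, by omega⟩ : Fin q)) ≠ w := by
    rw [← hammingDist_pos]; omega
  calc 2 = #({_, w} : Finset (Fin m → Fin q)) := (card_pair hne).symm
    _ ≤ Aq q m d := card_le_Aq (hammingSeparated_pair (by omega))

/-- In an optimal code, move a word toward its nearest neighbour until they are at distance
exactly `d`; by the triangle inequality the code stays `d`-separated. -/
theorem exists_hasMinDist_card_eq_Aq (hq : 2 ≤ q) (hd : 1 ≤ d) (hdm : d ≤ m) :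
    ∃ C : Finset (Fin m → Fin q), HasMinDist C d ∧ #C = Aq q m d := by
  obtain ⟨C, hC, hCcard⟩ := exists_card_eq_Aq (q := q) (m := m) (d := d)
  have hC2 : 2 ≤ #C := hCcard ▸ two_le_Aq hq hd hdm
  obtain ⟨v, hv⟩ : C.Nonempty := card_pos.mp (by omega)
  obtain ⟨u, hu, hnearest⟩ := exists_min_image (C.erase v) (hammingDist · v)
    (card_pos.mp (by rw [card_erase_of_mem hv]; omega))
  obtain ⟨huv, huC⟩ := mem_erase.mp hu
  obtain ⟨w, huw, hwv⟩ := exists_hammingDist_eq_of_le (hC u huC v hv huv)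
  have hfar : ∀ c ∈ C.erase v, d ≤ hammingDist c w := fun c hc => by
    have := hnearest c hc
    have := hammingDist_triangle c w v
    have := hC u huC v hv huv
    omega
  have hw : w ∉ C.erase v := fun h => by
    have := hfar w h
    rw [hammingDist_self] at this
    omega
  refine ⟨insert w (C.erase v),
    ⟨?_, u, mem_insert_of_mem hu, w, mem_insert_self _ _, ?_, huw⟩, ?_⟩
  · simp only [mem_insert]
    rintro c₁ (rfl | h₁) c₂ (rfl | h₂) hne
    · exact absurd rfl hne
    · rw [hammingDist_comm]; exact hfar c₂ h₂
    · exact hfar c₁ h₁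
    · exact hC c₁ (mem_of_mem_erase h₁) c₂ (mem_of_mem_erase h₂) hne
  · rw [← hammingDist_pos]; omega
  · rw [card_insert_of_notMem hw, card_erase_of_mem hv]; omega

theorem card_le_Aq_of_eqOn_compl {n : ℕ} {D : Finset (Fin n → Fin q)} {J : Finset (Fin n)}
    (hJ : #J = m) (hD : HammingSeparated D d) (x : Fin n → Fin q)
    (hDx : ∀ c ∈ D, ∀ i ∉ J, c i = x i) : #D ≤ Aq q m d := by
  set ψ := J.orderEmbOfFin hJ
  have hψ : ∀ u ∈ D, ∀ v ∈ D, hammingDist (u ∘ ψ) (v ∘ ψ) = hammingDist u v :=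
    fun u hu v hv => hammingDist_comp_of_eqOn_compl_range ψ.injective fun i hi => by
      rw [range_orderEmbOfFin] at hi
      rw [hDx u hu i hi, hDx v hv i hi]
  rw [← card_image_of_hammingDist_eq hψ]
  exact card_le_Aq (hD.image hψ)

end Aq

section Counting

variable {α : Type*}

theorem card_powerset_filter_card_le (M : Finset α) (r : ℕ) :
    #{T ∈ M.powerset | #T ≤ r} = V2 #M r := by
  rw [card_eq_sum_card_fiberwise (f := card) (t := range (r + 1))
    (fun T hT => by simpa [Nat.lt_succ_iff] using (mem_filter.mp hT).2), V2]
  refine sum_congr rfl fun i hi => ?_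
  rw [filter_filter, ← card_powersetCard]
  congr 1
  rw [powersetCard_eq_filter]
  exact filter_congr fun T _ => by
    constructor
    · exact And.right
    · rintro rfl; exact ⟨by simpa [Nat.lt_succ_iff] using hi, rfl⟩

theorem card_filter_superset_card_le [DecidableEq α] [Fintype α] {I : Finset α} {t : ℕ}
    (hIt : #I ≤ t) :
    #{S : Finset α | I ⊆ S ∧ #S ≤ t} = V2 (Fintype.card α - #I) (t - #I) := by
  rw [← card_compl, ← card_powerset_filter_card_le]
  refine card_nbij' (· \ I) (· ∪ I) ?_ ?_ ?_ ?_
  · intro S hS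
    simp only [coe_filter, mem_univ, true_and, Set.mem_ofPred_eq, mem_powerset] at hS ⊢
    refine ⟨fun i hi => mem_compl.mpr (mem_sdiff.mp hi).2, ?_⟩
    rw [card_sdiff_of_subset hS.1]
    omega
  · intro T hT
    simp only [coe_filter, mem_powerset, Set.mem_ofPred_eq, mem_univ, true_and] at hT ⊢
    have hdisj : Disjoint T I := disjoint_left.mpr fun i hi => mem_compl.mp (hT.1 hi)
    refine ⟨subset_union_right, ?_⟩
    rw [card_union_of_disjoint hdisj]
    omega
  · intro S hS
    simp only [coe_filter, mem_univ, true_and, Set.mem_ofPred_eq] at hS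
    exact sdiff_union_of_subset hS.1
  · intro T hT
    simp only [coe_filter, mem_powerset, Set.mem_ofPred_eq] at hT
    dsimp only
    rw [union_sdiff_right, sdiff_eq_self_of_disjoint
      (disjoint_left.mpr fun i hi => mem_compl.mp (hT.1 hi))]

end Counting

section Erasure

variable {n q t : ℕ}

def erasedSet (y : Fin n → Option (Fin q)) : Finset (Fin n) := {i | y i = none}

def eraseAt (x : Fin n → Fin q) (S : Finset (Fin n)) : Fin n → Option (Fin q) :=
  fun i => if i ∈ S then none else some (x i)

theorem erasedSet_eraseAt (x : Fin n → Fin q) (S : Finset (Fin n)) :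
    erasedSet (eraseAt x S) = S := by
  ext i
  by_cases hi : i ∈ S <;> simp [erasedSet, eraseAt, hi]

theorem eraseAt_injective (x : Fin n → Fin q) : (eraseAt x).Injective := fun S T h => by
  rw [← erasedSet_eraseAt x S, h, erasedSet_eraseAt]

theorem ErasureOutput.eq_eraseAt {x : Fin n → Fin q} {y : Fin n → Option (Fin q)}
    (h : ErasureOutput n q t x y) : y = eraseAt x (erasedSet y) := by
  funext i
  rcases h.1 i with hi | hi <;> simp [eraseAt, erasedSet, hi]

theorem erasureOutput_eraseAt_iff {c x : Fin n → Fin q} {S : Finset (Fin n)} :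
    ErasureOutput n q t c (eraseAt x S) ↔ (∀ i ∉ S, c i = x i) ∧ #S ≤ t := by
  refine and_congr (forall_congr' fun i => ?_) ?_
  · by_cases hi : i ∈ S <;> simp [eraseAt, hi, eq_comm]
  · exact iff_of_eq (congrArg (#· ≤ t) (erasedSet_eraseAt x S))

theorem card_le_V2_of_subset_erasedSet {x : Fin n → Fin q}
    {Y : Finset (Fin n → Option (Fin q))} {K : Finset (Fin n)} (hKt : #K ≤ t)
    (hY : ∀ y ∈ Y, ErasureOutput n q t x y) (hK : ∀ y ∈ Y, K ⊆ erasedSet y) :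
    #Y ≤ V2 (n - #K) (t - #K) := by
  calc #Y ≤ #{S : Finset (Fin n) | K ⊆ S ∧ #S ≤ t} := by
        refine card_le_card_of_injOn erasedSet (fun y hy => ?_) fun y₁ hy₁ y₂ hy₂ h => ?_
        · simpa using ⟨hK y hy, (hY y hy).2⟩
        · rw [(hY y₁ hy₁).eq_eraseAt, (hY y₂ hy₂).eq_eraseAt, h]
    _ = V2 (n - #K) (t - #K) := by rw [card_filter_superset_card_le hKt, Fintype.card_fin]

theorem card_inf_erasedSet_le {a : ℕ} (ha : a + 1 ≤ t) {x : Fin n → Fin q}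
    {Y : Finset (Fin n → Option (Fin q))} (hY : ∀ y ∈ Y, ErasureOutput n q t x y)
    (hN : V2 (n - a - 1) (t - a - 1) < #Y) : #(Y.inf erasedSet) ≤ a := by
  by_contra! hI
  obtain ⟨K, hKI, hK⟩ := exists_subset_card_eq (show a + 1 ≤ _ from hI)
  have := card_le_V2_of_subset_erasedSet (hK ▸ ha) hY fun y hy => hKI.trans (inf_le hy)
  rw [hK, ← Nat.sub_sub, ← Nat.sub_sub] at this
  omega

theorem eq_of_notMem_inf_erasedSet {c x : Fin n → Fin q}
    {Y : Finset (Fin n → Option (Fin q))}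
    (hx : ∀ y ∈ Y, ErasureOutput n q t x y) (hc : ∀ y ∈ Y, ErasureOutput n q t c y)
    {i : Fin n} (hi : i ∉ Y.inf erasedSet) : c i = x i := by
  obtain ⟨y, hy, hiy⟩ : ∃ y ∈ Y, y i ≠ none := by simpa [mem_inf, erasedSet] using hi
  have hyx := (hx y hy).1 i
  have hyc := (hc y hy).1 i
  simp only [hiy, or_false] at hyx hyc
  exact Option.some_injective _ (hyc.symm.trans hyx)

theorem exists_outputs_forall_erasureOutput_iff (x : Fin n → Fin q) {I : Finset (Fin n)}
    (hIt : #I ≤ t) {N : ℕ} (hN0 : 1 ≤ N) (hN : N ≤ V2 (n - #I) (t - #I)) :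
    ∃ Y : Finset (Fin n → Option (Fin q)), #Y = N ∧
      ∀ c, (∀ y ∈ Y, ErasureOutput n q t c y) ↔ ∀ i ∉ I, c i = x i := by
  obtain ⟨𝒮, hI𝒮, h𝒮, h𝒮N⟩ := exists_subsuperset_card_eq
    (s := {I}) (t := {S : Finset (Fin n) | I ⊆ S ∧ #S ≤ t}) (by simpa using hIt) (by simpa)
    (by rwa [card_filter_superset_card_le hIt, Fintype.card_fin])
  refine ⟨𝒮.image (eraseAt x), by rwa [card_image_of_injective _ (eraseAt_injective x)],
    fun c => ⟨fun hc => ?_, fun hc => ?_⟩⟩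
  · have hI := hc _ (mem_image_of_mem _ (hI𝒮 (mem_singleton_self I)))
    exact (erasureOutput_eraseAt_iff.mp hI).1
  · simp only [mem_image, forall_exists_index, and_imp, forall_apply_eq_imp_iff₂]
    intro S hS
    obtain ⟨hIS, hSt⟩ := by simpa using h𝒮 hS
    exact erasureOutput_eraseAt_iff.mpr ⟨fun i hi => hc i fun h => hi (hIS h), hSt⟩

end Erasure

theorem HasMinDist.image {m n q d : ℕ} {C : Finset (Fin m → Fin q)} (h : HasMinDist C d)
    {φ : (Fin m → Fin q) → (Fin n → Fin q)}
    (hφ : ∀ u ∈ C, ∀ v ∈ C, hammingDist (φ u) (φ v) = hammingDist u v) :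
    HasMinDist (C.image φ) d := by
  obtain ⟨u, hu, v, hv, huv, hd⟩ := h.2
  refine ⟨HammingSeparated.image h.1 hφ, φ u, mem_image_of_mem φ hu, φ v,
    mem_image_of_mem φ hv, ?_, hφ u hu v hv ▸ hd⟩
  rw [← hammingDist_ne_zero, hφ u hu v hv]
  exact hammingDist_ne_zero.mpr huv

section Construction

variable {n q d : ℕ}

theorem exists_hasMinDist_card_eqOn_compl_eq_Aq_of_le (hq : 2 ≤ q) (hd : 1 ≤ d)
    {I : Finset (Fin n)} (hdI : d ≤ #I) :
    ∃ C : Finset (Fin n → Fin q), HasMinDist C d ∧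
      ∃ x ∈ C, #{c ∈ C | ∀ i ∉ I, c i = x i} = Aq q #I d := by
  obtain ⟨D, hD, hDcard⟩ := exists_hasMinDist_card_eq_Aq hq hd hdI
  set f := I.orderEmbOfFin rfl
  set pad : (Fin #I → Fin q) → (Fin n → Fin q) :=
    fun c => Function.extend f c fun _ => ⟨0, by omega⟩
  have hpad : ∀ u ∈ D, ∀ v ∈ D, hammingDist (pad u) (pad v) = hammingDist u v :=
    fun u _ v _ => hammingDist_extend f.injective u v _
  have hoff : ∀ c i, i ∉ I → pad c i = ⟨0, by omega⟩ := fun c i hi =>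
    Function.extend_apply' _ _ _ (by simpa [f, ← Set.mem_range, range_orderEmbOfFin] using hi)
  obtain ⟨u, hu, -⟩ := hD.2
  refine ⟨D.image pad, hD.image hpad, pad u, mem_image_of_mem pad hu, ?_⟩
  rw [filter_true_of_mem, card_image_of_hammingDist_eq hpad, hDcard]
  simp only [mem_image, forall_exists_index, and_imp, forall_apply_eq_imp_iff₂]
  exact fun c _ i hi => (hoff c i hi).trans (hoff u i hi).symm

theorem exists_hasMinDist_card_eqOn_compl_eq_Aq_of_lt (hq : 2 ≤ q) (hdn : d ≤ n)
    {I : Finset (Fin n)} (hId : #I < d) :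
    ∃ C : Finset (Fin n → Fin q), HasMinDist C d ∧
      ∃ x ∈ C, #{c ∈ C | ∀ i ∉ I, c i = x i} = Aq q #I d := by
  have : Nontrivial (Fin q) := Fin.nontrivial_iff_two_le.mpr hq
  obtain ⟨J, hIJ, hJ⟩ := exists_superset_card_eq hId.le (by simpa using hdn)
  set x : Fin n → Fin q := fun _ => ⟨0, by omega⟩
  obtain ⟨w, hw⟩ := exists_ne_iff_mem x J
  have hxw : hammingDist x w = d := hJ ▸ hammingDist_eq_card_of_ne_iff hw
  have hne : x ≠ w := by rw [← hammingDist_pos]; omega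
  obtain ⟨i, hiJ, hiI⟩ := exists_mem_notMem_of_card_lt_card (hJ ▸ hId)
  have hfilter : ({c ∈ {x, w} | ∀ i ∉ I, c i = x i} : Finset _) = {x} := by
    rw [filter_insert, if_pos fun _ _ => rfl, filter_singleton,
      if_neg fun h => (hw i).mpr hiJ (h i hiI).symm, insert_empty]
  refine ⟨{x, w}, ⟨hammingSeparated_pair hxw.ge, x, by simp, w, by simp, hne, hxw⟩,
    x, by simp, ?_⟩
  rw [hfilter, card_singleton, Aq_eq_one_of_lt (by omega) hId]

theorem exists_hasMinDist_card_eqOn_compl_eq_Aq (hq : 2 ≤ q) (hd : 1 ≤ d) (hdn : d ≤ n)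
    (I : Finset (Fin n)) :
    ∃ C : Finset (Fin n → Fin q), HasMinDist C d ∧
      ∃ x ∈ C, #{c ∈ C | ∀ i ∉ I, c i = x i} = Aq q #I d := by
  rcases le_or_gt d #I with hdI | hId
  · exact exists_hasMinDist_card_eqOn_compl_eq_Aq_of_le hq hd hdI
  · exact exists_hasMinDist_card_eqOn_compl_eq_Aq_of_lt hq hdn hId

end Construction

theorem card_filter_erasureOutput_le_Aq {n q t a d : ℕ} (ha : a + 1 ≤ t) (han : a ≤ n)
    {C : Finset (Fin n → Fin q)} (hC : HammingSeparated C d) {x : Fin n → Fin q}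
    {Y : Finset (Fin n → Option (Fin q))} (hY : ∀ y ∈ Y, ErasureOutput n q t x y)
    (hN : V2 (n - a - 1) (t - a - 1) < #Y) :
    #{c ∈ C | ∀ y ∈ Y, ErasureOutput n q t c y} ≤ Aq q a d := by
  obtain ⟨J, hIJ, hJ⟩ := exists_superset_card_eq (card_inf_erasedSet_le ha hY hN)
    (by simpa using han)
  refine card_le_Aq_of_eqOn_compl hJ (hC.mono (filter_subset _ _)) x fun c hc i hi => ?_
  exact eq_of_notMem_inf_erasedSet hY (mem_filter.mp hc).2 fun h => hi (hIJ h)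

theorem stmt4_general (q n t a N d : ℕ) (hq : 2 ≤ q) (htn : t ≤ n) (ha : a + 1 ≤ t)
    (hd1 : 1 ≤ d) (hdn : d ≤ n)
    (hN1 : V2 (n - a - 1) (t - a - 1) + 1 ≤ N) (hN2 : N ≤ V2 (n - a) (t - a)) :
    (∀ (C : Finset (Fin n → Fin q)), HasMinDist C d →
      ∀ x ∈ C, ∀ (Y : Finset (Fin n → Option (Fin q))),
        Y.card = N → (∀ y ∈ Y, ErasureOutput n q t x y) →
        (C.filter (fun c => ∀ y ∈ Y, ErasureOutput n q t c y)).card ≤ Aq q a d)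
    ∧ (∃ (C : Finset (Fin n → Fin q)), HasMinDist C d ∧
        ∃ x ∈ C, ∃ (Y : Finset (Fin n → Option (Fin q))),
          Y.card = N ∧ (∀ y ∈ Y, ErasureOutput n q t x y) ∧
          (C.filter (fun c => ∀ y ∈ Y, ErasureOutput n q t c y)).card = Aq q a d) := by
  have han : a ≤ n := by omega
  refine ⟨fun C hC x _ Y hYN hY =>
    card_filter_erasureOutput_le_Aq ha han hC.1 hY (by omega), ?_⟩
  obtain ⟨I, -, hI⟩ := exists_subset_card_eq (s := (univ : Finset (Fin n))) (by simpa using han)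
  obtain ⟨C, hC, x, hx, hCx⟩ := exists_hasMinDist_card_eqOn_compl_eq_Aq hq hd1 hdn I
  obtain ⟨Y, hYN, hY⟩ := exists_outputs_forall_erasureOutput_iff x (t := t) (I := I)
    (by omega) (by omega) (hI ▸ hN2)
  refine ⟨C, hC, x, hx, Y, hYN, (hY x).mpr fun _ _ => rfl, ?_⟩
  rw [filter_congr fun c _ => hY c, hCx, hI]

/-- For a code `C ⊆ (Z_q)^n` of minimum distance `d`, at most `t` erasures per channel and `N`
distinct output words with `V_2(n-a-1,t-a-1) + 1 ≤ N ≤ V_2(n-a,t-a)` for some `a ∈ [1,t-1]`,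
the maximum list size is exactly `A_q(a,d)`. -/
theorem stmt4 (q n t a N d : ℕ) (hq : 2 ≤ q) (htn : t ≤ n) (ha1 : 1 ≤ a) (ha : a + 1 ≤ t)
    (hd1 : 1 ≤ d) (hdn : d ≤ n)
    (hN1 : V2 (n - a - 1) (t - a - 1) + 1 ≤ N) (hN2 : N ≤ V2 (n - a) (t - a)) :
    (∀ (C : Finset (Fin n → Fin q)), HasMinDist C d →
      ∀ x ∈ C, ∀ (Y : Finset (Fin n → Option (Fin q))),
        Y.card = N → (∀ y ∈ Y, ErasureOutput n q t x y) →
        (C.filter (fun c => ∀ y ∈ Y, ErasureOutput n q t c y)).card ≤ Aq q a d)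
    ∧ (∃ (C : Finset (Fin n → Fin q)), HasMinDist C d ∧
        ∃ x ∈ C, ∃ (Y : Finset (Fin n → Option (Fin q))),
          Y.card = N ∧ (∀ y ∈ Y, ErasureOutput n q t x y) ∧
          (C.filter (fun c => ∀ y ∈ Y, ErasureOutput n q t c y)).card = Aq q a d) :=
  stmt4_general q n t a N d hq htn ha hd1 hdn hN1 hN2
end

section
/- Let t = e + ℓ with ℓ ≥ 1, b ≥ 1, q ≥ 2, and n ≥ ℓ - 2 + (ℓ-1)²·2^b·(q-1)^{b-1}. Let Y ⊆ Z_q^n with |Y| ≥ V_q(n, ℓ-1) + 1, all words of Y within Hamming distance t of a word c ∈ Z_q^n. Then for any set D ⊆ [1,n] with |D| = b, there exists y ∈ Y such that |supp(c - y) \ D| ≥ ℓ - 1. -/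
/-!
If every `y ∈ Y` differed from `c` in at most `m = ℓ - 2` coordinates outside `D`, then
`y ↦ (y|_D, D.piecewise c y)` would inject `Y` into `Z_q^D × B(c, m)`, so
`|Y| ≤ q^b V_q(n, m)`. Since the terms `(q-1)^i C(n,i)` increase up to `i = m`,
`V_q(n, m) ≤ (m+1)(q-1)^m C(n,m)`, and the lower bound on `n` makes `q^b` times this at most
the single term `(q-1)^(m+1) C(n, m+1)` of `V_q(n, m+1) < |Y|`.
-/

open Finset

def hammingVolume (q n r : ℕ) : ℕ := ∑ i ∈ range (r + 1), (q - 1) ^ i * n.choose i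

theorem pow_mul_choose_le_hammingVolume (q n r : ℕ) :
    (q - 1) ^ r * n.choose r ≤ hammingVolume q n r :=
  single_le_sum (f := fun i => (q - 1) ^ i * n.choose i) (fun _ _ => Nat.zero_le _)
    (mem_range.2 r.lt_succ_self)

theorem Nat.choose_le_choose_of_le_half {n i r : ℕ} (hir : i ≤ r) (hr : r ≤ n / 2) :
    n.choose i ≤ n.choose r := by
  induction r, hir using Nat.le_induction with
  | base => rfl
  | succ r _ ih => exact (ih (by omega)).trans (Nat.choose_le_succ_of_lt_half_left (by omega))

theorem hammingVolume_le_succ_mul {q n r : ℕ} (hq : 2 ≤ q) (hr : r ≤ n / 2) :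
    hammingVolume q n r ≤ (r + 1) * ((q - 1) ^ r * n.choose r) := by
  have hterm : ∀ i ∈ range (r + 1), (q - 1) ^ i * n.choose i ≤ (q - 1) ^ r * n.choose r := by
    intro i hi
    have hir : i ≤ r := Nat.lt_succ_iff.1 (mem_range.1 hi)
    exact Nat.mul_le_mul (Nat.pow_le_pow_right (by omega) hir)
      (Nat.choose_le_choose_of_le_half hir hr)
  simpa [hammingVolume] using sum_le_card_nsmul _ _ _ hterm

theorem pow_le_two_pow_mul_pred_pow_mul_pred {q : ℕ} (hq : 2 ≤ q) (b : ℕ) :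
    q ^ b ≤ 2 ^ b * (q - 1) ^ (b - 1) * (q - 1) :=
  calc q ^ b ≤ (2 * (q - 1)) ^ b := Nat.pow_le_pow_left (by omega) b
    _ = 2 ^ b * (q - 1) ^ b := mul_pow _ _ _
    _ ≤ 2 ^ b * (q - 1) ^ (b - 1 + 1) :=
        Nat.mul_le_mul_left _ (Nat.pow_le_pow_right (by omega) (by omega))
    _ = 2 ^ b * (q - 1) ^ (b - 1) * (q - 1) := by ring

theorem pow_mul_hammingVolume_le {q n r b : ℕ} (hq : 2 ≤ q)
    (hn : r + (r + 1) ^ 2 * 2 ^ b * (q - 1) ^ (b - 1) ≤ n) :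
    q ^ b * hammingVolume q n r ≤ (q - 1) ^ (r + 1) * n.choose (r + 1) := by
  have hsq : (r + 1) ^ 2 ≤ n - r := by
    have : 1 ≤ 2 ^ b * (q - 1) ^ (b - 1) :=
      Nat.mul_le_mul Nat.one_le_two_pow (Nat.one_le_pow _ _ (by omega))
    have : (r + 1) ^ 2 ≤ (r + 1) ^ 2 * 2 ^ b * (q - 1) ^ (b - 1) := by
      rw [mul_assoc]; exact Nat.le_mul_of_pos_right _ this
    omega
  have hr : r ≤ n / 2 := by
    have : r + 1 ≤ (r + 1) ^ 2 := Nat.le_self_pow two_ne_zero _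
    omega
  have hkey : q ^ b * (r + 1) ^ 2 ≤ (q - 1) * (n - r) :=
    calc q ^ b * (r + 1) ^ 2 ≤ 2 ^ b * (q - 1) ^ (b - 1) * (q - 1) * (r + 1) ^ 2 :=
          Nat.mul_le_mul_right _ (pow_le_two_pow_mul_pred_pow_mul_pred hq b)
      _ = (r + 1) ^ 2 * 2 ^ b * (q - 1) ^ (b - 1) * (q - 1) := by ring
      _ ≤ (n - r) * (q - 1) := Nat.mul_le_mul_right _ (by omega)
      _ = (q - 1) * (n - r) := mul_comm _ _
  refine Nat.le_of_mul_le_mul_right ?_ r.succ_pos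
  calc q ^ b * hammingVolume q n r * (r + 1)
        ≤ q ^ b * ((r + 1) * ((q - 1) ^ r * n.choose r)) * (r + 1) := by
        gcongr; exact hammingVolume_le_succ_mul hq hr
    _ = q ^ b * (r + 1) ^ 2 * ((q - 1) ^ r * n.choose r) := by ring
    _ ≤ (q - 1) * (n - r) * ((q - 1) ^ r * n.choose r) := Nat.mul_le_mul_right _ hkey
    _ = (q - 1) ^ (r + 1) * (n.choose r * (n - r)) := by ring
    _ = (q - 1) ^ (r + 1) * n.choose (r + 1) * (r + 1) := by
        rw [← Nat.choose_succ_right_eq, mul_assoc]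

section HammingBall

variable {ι β : Type*} [Fintype ι] [DecidableEq ι] [DecidableEq β]

theorem hammingDist_piecewise_self (c y : ι → β) (D : Finset ι) :
    hammingDist c (D.piecewise c y) = #((univ.filter fun i => c i ≠ y i) \ D) := by
  unfold hammingDist
  congr 1
  ext i
  by_cases h : i ∈ D <;> simp [h]

variable [Fintype β]

def hammingBall (c : ι → β) (r : ℕ) : Finset (ι → β) := {z | hammingDist c z ≤ r}

def wordsDifferingOn (c : ι → β) (S : Finset ι) : Finset (ι → β) :=
  Fintype.piFinset fun i => if i ∈ S then {c i}ᶜ else {c i}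

theorem card_wordsDifferingOn (c : ι → β) (S : Finset ι) :
    #(wordsDifferingOn c S) = (Fintype.card β - 1) ^ #S := by
  have hcard : ∀ i, #(if i ∈ S then ({c i}ᶜ : Finset β) else {c i}) =
      if i ∈ S then Fintype.card β - 1 else 1 := by
    intro i; split <;> simp [card_compl]
  simp only [wordsDifferingOn, Fintype.card_piFinset, hcard, prod_ite_mem, univ_inter,
    prod_const]

theorem mem_wordsDifferingOn_filter_ne (c z : ι → β) :
    z ∈ wordsDifferingOn c (univ.filter fun i => c i ≠ z i) := by
  simp only [wordsDifferingOn, Fintype.mem_piFinset]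
  intro i
  by_cases h : c i = z i <;> simp [h, eq_comm]

theorem card_hammingBall_le (c : ι → β) (r : ℕ) :
    #(hammingBall c r) ≤ hammingVolume (Fintype.card β) (Fintype.card ι) r := by
  have hcover : hammingBall c r ⊆
      (range (r + 1)).biUnion fun i => (powersetCard i univ).biUnion (wordsDifferingOn c) := by
    intro z hz
    simp only [hammingBall, mem_filter, mem_univ, true_and] at hz
    simp only [mem_biUnion, mem_range, mem_powersetCard, subset_univ, true_and]
    exact ⟨_, Nat.lt_succ_of_le hz, _, rfl, mem_wordsDifferingOn_filter_ne c z⟩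
  refine (card_le_card hcover).trans (card_biUnion_le.trans (sum_le_sum fun i _ => ?_))
  calc #((powersetCard i univ).biUnion (wordsDifferingOn c))
      ≤ ∑ S ∈ powersetCard i univ, #(wordsDifferingOn c S) := card_biUnion_le
    _ = (Fintype.card β - 1) ^ i * (Fintype.card ι).choose i := by
        rw [sum_congr rfl fun S hS => by
          rw [card_wordsDifferingOn, (mem_powersetCard.1 hS).2]]
        simp [mul_comm]

theorem card_le_pow_mul_card_hammingBall (c : ι → β) {Y : Finset (ι → β)} {D : Finset ι}
    {r : ℕ} (hY : ∀ y ∈ Y, #((univ.filter fun i => c i ≠ y i) \ D) ≤ r) :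
    #Y ≤ Fintype.card β ^ #D * #(hammingBall c r) := by
  have hmaps : Set.MapsTo (fun y => ((fun i : D => y i), D.piecewise c y)) Y
      (((univ : Finset (D → β)) ×ˢ hammingBall c r : Finset _) : Set _) := by
    intro y hy
    simpa [hammingBall, hammingDist_piecewise_self] using hY y hy
  have hinj : Set.InjOn (fun y => ((fun i : D => y i), D.piecewise c y)) Y := by
    intro y₁ _ y₂ _ h
    simp only [Prod.mk.injEq] at h
    funext i
    by_cases hi : i ∈ D
    · exact congrFun h.1 ⟨i, hi⟩
    · simpa [piecewise_eq_of_notMem _ _ _ hi] using congrFun h.2 i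
  simpa using card_le_card_of_injOn _ hmaps hinj

end HammingBall

theorem stmt9_general (q n ℓ b : ℕ) (hq : 2 ≤ q)
    (hn : ℓ - 2 + (ℓ - 1) ^ 2 * 2 ^ b * (q - 1) ^ (b - 1) ≤ n)
    (c : Fin n → Fin q) (Y : Finset (Fin n → Fin q))
    (hY : (∑ i ∈ Finset.range ℓ, (q - 1) ^ i * n.choose i) + 1 ≤ Y.card)
    (D : Finset (Fin n)) (hD : D.card = b) :
    ∃ y ∈ Y, ℓ - 1 ≤ ((univ.filter (fun i => c i ≠ y i)) \ D).card := by
  obtain hℓ | ⟨m, rfl⟩ : ℓ < 2 ∨ ∃ m, ℓ = m + 2 :=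
    (Nat.lt_or_ge ℓ 2).imp_right fun h => ⟨ℓ - 2, by omega⟩
  · obtain ⟨y, hy⟩ := card_pos.1 (by omega : 0 < #Y)
    exact ⟨y, hy, by omega⟩
  by_contra! hfar
  have hYle : #Y ≤ q ^ b * hammingVolume q n m := by
    have hball := card_le_pow_mul_card_hammingBall c fun y hy => Nat.le_of_lt_succ (hfar y hy)
    simp only [Fintype.card_fin, hD] at hball
    exact hball.trans (Nat.mul_le_mul_left _ (by simpa using card_hammingBall_le c m))
  have hvol := pow_mul_hammingVolume_le (n := n) (r := m) hq (by simpa using hn)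
  have htop := pow_mul_choose_le_hammingVolume q n (m + 1)
  have hY' : hammingVolume q n (m + 1) + 1 ≤ #Y := hY
  omega

/-- Lemma "ℓ-1 kaukana": with `t = e + ℓ`, `n ≥ ℓ-2 + (ℓ-1)²·2^b·(q-1)^{b-1}` and
`|Y| ≥ V_q(n,ℓ-1) + 1` where every word of `Y` is within Hamming distance `t` of `c`,
for any coordinate set `D` of size `b` there is `y ∈ Y` with `|supp(c-y) \ D| ≥ ℓ-1`. -/
theorem stmt9 (q n e ℓ b t : ℕ) (ht : t = e + ℓ) (hq : 2 ≤ q) (hl : 1 ≤ ℓ) (hb : 1 ≤ b)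
    (hn : ℓ - 2 + (ℓ - 1) ^ 2 * 2 ^ b * (q - 1) ^ (b - 1) ≤ n)
    (c : Fin n → Fin q) (Y : Finset (Fin n → Fin q))
    (hY : (∑ i ∈ Finset.range ℓ, (q - 1) ^ i * n.choose i) + 1 ≤ Y.card)
    (hYt : ∀ y ∈ Y, hammingDist c y ≤ t)
    (D : Finset (Fin n)) (hD : D.card = b) :
    ∃ y ∈ Y, ℓ - 1 ≤ ((univ.filter (fun i => c i ≠ y i)) \ D).card :=
  stmt9_general q n ℓ b hq hn c Y hY D hD
end

section
/- Let ℓ ≥ 1, q ≥ 3, t = e + ℓ, b ≥ (ℓ(q-1)+1)(2e+2), and n ≥ ℓ-2 + (ℓ-1)²·2^b·(q-1)^{b-1}. For any e-error-correcting code C ⊆ Z_q^n and any N ≥ V_q(n, ℓ-1) + 1 channels each introducing at most t substitution errors (with distinct outputs), the maximum list size satisfies L ≤ ℓ(q-1) + 1. -/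
/-!
Suppose `ℓ(q-1)+2` codewords, `x` among them, lie within `t = e + ℓ` of every word of `Y`.
The bound on `n` gives `q^b · V_q(n, ℓ-2) ≤ V_q(n, ℓ-1) < |Y|`, so the words of `Y` cannot all
agree with one fixed word up to `ℓ-2` errors outside some set of at most `b` positions.
If two of the codewords were at distance at least `2e+3`, every `y ∈ Y` would agree with one of
them up to `ℓ-2` errors outside the at most `2t ≤ b` positions where they differ; hence all the
codewords agree with `x` outside a set `U` of at most `(ℓ(q-1)+1)(2e+2) ≤ b` positions. For the
same reason, for some `y ∈ Y` the word `z` equal to `y` on `U` and to `x` off `U` is within `e+1`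
of every codeword. Codewords within `e+1` of `z` and at mutual distance at least `2e+1` never
share a symbol at a position where they differ from `z`, so at each position where `z` and `y`
differ at most `q-1` of them differ from `z` and at most one agrees with `y`. Double counting
these incidences gives `d(z, y) < ℓ` for every `y ∈ Y`, hence `|Y| ≤ V_q(n, ℓ-1)`.
-/

open Finset

section HammingIdentities

variable {ι α : Type*} [Fintype ι] [DecidableEq α]

theorem hammingDist_add_card_add_card (z a b : ι → α) :
    hammingDist a b + #{k | z k ≠ a k ∧ z k ≠ b k} + #{k | z k ≠ a k ∧ a k = b k}
      = hammingDist z a + hammingDist z b := by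
  simp only [hammingDist, card_filter, ← sum_add_distrib]
  refine sum_congr rfl fun k _ => ?_
  by_cases h1 : z k = a k <;> by_cases h2 : z k = b k <;> by_cases h3 : a k = b k <;>
    simp_all

theorem card_filter_ne_and_eq_le (z a b : ι → α) :
    #{k | z k ≠ a k ∧ a k = b k} ≤ #{k | z k ≠ a k ∧ z k ≠ b k} :=
  card_le_card fun k hk => by
    simp only [mem_filter, mem_univ, true_and] at hk ⊢
    exact ⟨hk.1, hk.2 ▸ hk.1⟩

theorem hammingDist_add_two_mul_card_le (z a b : ι → α) :
    hammingDist a b + 2 * #{k | z k ≠ a k ∧ a k = b k}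
      ≤ hammingDist z a + hammingDist z b := by
  have := card_filter_ne_and_eq_le z a b
  have := hammingDist_add_card_add_card z a b
  omega

theorem hammingDist_eq_hammingDist_piecewise_add [DecidableEq ι] {U : Finset ι} {x c : ι → α}
    (hc : ∀ k ∉ U, c k = x k) (y : ι → α) :
    hammingDist c y = hammingDist (U.piecewise y x) c + #{k | k ∉ U ∧ y k ≠ x k} := by
  simp only [hammingDist, card_filter, ← sum_add_distrib]
  refine sum_congr rfl fun k _ => ?_
  by_cases hk : k ∈ U
  · simp [hk, ne_comm]
  · simp [hk, hc k hk, eq_comm]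

end HammingIdentities

section Counting

variable {ι α : Type*} [Fintype ι] [DecidableEq ι] [Fintype α] [DecidableEq α]

theorem card_hammingSphere_le (z : ι → α) (i : ℕ) :
    #{y | hammingDist z y = i} ≤ (Fintype.card α - 1) ^ i * (Fintype.card ι).choose i := by
  have hsub : ({y | hammingDist z y = i} : Finset (ι → α)) ⊆ (powersetCard i univ).biUnion
      fun A => Fintype.piFinset fun k => if k ∈ A then ({z k}ᶜ : Finset α) else {z k} := by
    intro y hy
    simp only [mem_filter, mem_univ, true_and] at hy
    refine mem_biUnion.2 ⟨({k | z k ≠ y k} : Finset ι),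
      mem_powersetCard.2 ⟨subset_univ _, hy⟩, Fintype.mem_piFinset.2 fun k => ?_⟩
    by_cases h : z k = y k <;> simp [h, Ne.symm]
  have hcard : ∀ A ∈ powersetCard i (univ : Finset ι), #(Fintype.piFinset fun k =>
      if k ∈ A then ({z k}ᶜ : Finset α) else {z k}) = (Fintype.card α - 1) ^ i := by
    intro A hA
    simp [Fintype.card_piFinset, apply_ite, prod_ite_mem, card_compl, (mem_powersetCard.1 hA).2]
  calc _ ≤ _ := card_le_card hsub
    _ ≤ _ := card_biUnion_le
    _ = _ := by
      rw [sum_congr rfl hcard, sum_const, card_powersetCard, card_univ, smul_eq_mul, mul_comm]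

theorem card_le_of_forall_hammingDist_lt {Y : Finset (ι → α)} (z : ι → α) {s : ℕ}
    (hY : ∀ y ∈ Y, hammingDist z y < s) :
    #Y ≤ ∑ i ∈ range s, (Fintype.card α - 1) ^ i * (Fintype.card ι).choose i := by
  rw [card_eq_sum_card_fiberwise (f := hammingDist z) (t := range s)
    fun y hy => by simpa using hY y hy]
  refine sum_le_sum fun i _ => le_trans (card_le_card fun y => ?_) (card_hammingSphere_le z i)
  simp +contextual

theorem card_le_of_forall_card_filter_ne_lt {Y : Finset (ι → α)} (W : Finset ι) (w : ι → α)
    {s : ℕ} (hY : ∀ y ∈ Y, #{k | k ∉ W ∧ y k ≠ w k} < s) :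
    #Y ≤ Fintype.card α ^ #W
      * ∑ i ∈ range s, (Fintype.card α - 1) ^ i * (Fintype.card ι).choose i := by
  let decompose (y : ι → α) : (W → α) × (ι → α) := (fun k => y k, W.piecewise w y)
  have hmaps : ∀ y ∈ Y, decompose y
      ∈ (univ : Finset (W → α)) ×ˢ ({v | hammingDist w v < s} : Finset (ι → α)) := by
    intro y hy
    refine mem_product.2 ⟨mem_univ _, mem_filter.2 ⟨mem_univ _, ?_⟩⟩
    refine lt_of_le_of_lt (le_of_eq ?_) (hY y hy)
    simp only [hammingDist]
    congr 1
    ext k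
    by_cases hk : k ∈ W <;> simp [decompose, hk, eq_comm]
  have hinj : Set.InjOn decompose Y := by
    intro y _ y' _ h
    simp only [decompose, Prod.mk.injEq] at h
    funext k
    by_cases hk : k ∈ W
    · simpa using congr_fun h.1 ⟨k, hk⟩
    · simpa [hk] using congr_fun h.2 k
  calc #Y ≤ _ := card_le_card_of_injOn decompose (fun y hy => hmaps y hy) hinj
    _ ≤ _ := by
      rw [card_product, card_univ, Fintype.card_fun, Fintype.card_coe]
      exact Nat.mul_le_mul_left _
        (card_le_of_forall_hammingDist_lt w fun v hv => (mem_filter.1 hv).2)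

end Counting

section DoubleCounting

variable {ι α : Type*} [DecidableEq α]

theorem sum_card_filter_le_hammingDist_mul [Fintype ι] {γ : Type*} (S : Finset γ)
    (r : γ → ι → Prop) [∀ c k, Decidable (r c k)] {z y : ι → α} {N : ℕ}
    (h : ∀ k, z k ≠ y k → #{c ∈ S | r c k} ≤ N) :
    ∑ c ∈ S, #{k | z k ≠ y k ∧ r c k} ≤ hammingDist z y * N :=
  calc ∑ c ∈ S, #{k | z k ≠ y k ∧ r c k}
      = ∑ c ∈ S, #(({k | z k ≠ y k} : Finset ι).bipartiteAbove r c) := by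
        simp [bipartiteAbove, filter_filter]
    _ = ∑ k ∈ ({k | z k ≠ y k} : Finset ι), #(S.bipartiteBelow r k) :=
        sum_card_bipartiteAbove_eq_sum_card_bipartiteBelow _
    _ ≤ _ := by
      simpa [bipartiteBelow, hammingDist] using
        sum_le_card_nsmul _ _ N fun k hk => h k (mem_filter.1 hk).2

theorem card_filter_ne_apply_le [Fintype α] {S : Finset (ι → α)} {z : ι → α}
    (hinj : ∀ c ∈ S, ∀ c' ∈ S, ∀ k, z k ≠ c k → c k = c' k → c = c') (k : ι) :
    #{c ∈ S | z k ≠ c k} ≤ Fintype.card α - 1 :=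
  calc #{c ∈ S | z k ≠ c k} ≤ #({z k}ᶜ : Finset α) :=
        card_le_card_of_injOn (· k) (fun c hc => by simp [Ne.symm (mem_filter.1 hc).2])
          fun c hc c' hc' h =>
            hinj c (mem_filter.1 hc).1 c' (mem_filter.1 hc').1 k (mem_filter.1 hc).2 h
    _ = _ := by simp [card_compl]

theorem card_filter_apply_eq_le_one {S : Finset (ι → α)} {z : ι → α}
    (hinj : ∀ c ∈ S, ∀ c' ∈ S, ∀ k, z k ≠ c k → c k = c' k → c = c') {y : ι → α} {k : ι}
    (hzy : z k ≠ y k) : #{c ∈ S | y k = c k} ≤ 1 :=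
  card_le_one.2 fun c hc c' hc' => by
    rw [mem_filter] at hc hc'
    exact hinj c hc.1 c' hc'.1 k (hc.2 ▸ hzy) (hc.2.symm.trans hc'.2)

end DoubleCounting

section Centre

variable {ι α : Type*} [Fintype ι] [DecidableEq α] {S : Finset (ι → α)} {e : ℕ}

theorem eq_of_ne_of_apply_eq (hdist : ∀ c ∈ S, ∀ c' ∈ S, c ≠ c' → 2 * e + 1 ≤ hammingDist c c')
    {z : ι → α} (hz : ∀ c ∈ S, hammingDist z c ≤ e + 1) {c c' : ι → α} (hc : c ∈ S)
    (hc' : c' ∈ S) {k : ι} (hzc : z k ≠ c k) (hcc' : c k = c' k) : c = c' := by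
  by_contra hne
  have : 0 < #{k | z k ≠ c k ∧ c k = c' k} :=
    card_pos.2 ⟨k, mem_filter.2 ⟨mem_univ _, hzc, hcc'⟩⟩
  have := hammingDist_add_two_mul_card_le z c c'
  have := hdist c hc c' hc' hne
  have := hz c hc
  have := hz c' hc'
  omega

theorem card_le_card_filter_lt_hammingDist_add_one
    (hdist : ∀ c ∈ S, ∀ c' ∈ S, c ≠ c' → 2 * e + 1 ≤ hammingDist c c') (z : ι → α) :
    #S ≤ #{c ∈ S | e < hammingDist z c} + 1 := by
  have hnear : #{c ∈ S | ¬ e < hammingDist z c} ≤ 1 := by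
    refine card_le_one.2 fun c hc c' hc' => ?_
    simp only [mem_filter, not_lt] at hc hc'
    by_contra hne
    have := hdist c hc.1 c' hc'.1 hne
    have := hammingDist_triangle_left c c' z
    omega
  have := card_filter_add_card_filter_not (s := S) fun c => e < hammingDist z c
  omega

theorem le_hammingDist_of_one_lt_card (hS : 1 < #S)
    (hdist : ∀ c ∈ S, ∀ c' ∈ S, c ≠ c' → 2 * e + 1 ≤ hammingDist c c')
    {z : ι → α} (hz : ∀ c ∈ S, hammingDist z c ≤ e + 1) {c : ι → α} (hc : c ∈ S) :
    e ≤ hammingDist z c := by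
  obtain ⟨c', hc', hne⟩ := (one_lt_card_iff_nontrivial.1 hS).exists_ne c
  have := hdist c' hc' c hc hne
  have := hammingDist_triangle_left c' c z
  have := hz c' hc'
  omega

theorem not_le_of_incidence_bounds {s g m ℓ Q : ℕ} (hℓ : 1 ≤ ℓ) (hs : ℓ * Q + 2 ≤ s)
    (hsg : s ≤ g + 1) (hgm : g ≤ m * Q) (hsum : s * m + g ≤ s * ℓ + m * Q + m) :
    ¬ ℓ ≤ m := by
  intro hℓm
  obtain ⟨u, rfl⟩ : ∃ u, m = ℓ + 1 + u := by
    refine ⟨m - ℓ - 1, ?_⟩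
    by_contra h
    obtain rfl : m = ℓ := by omega
    omega
  obtain ⟨L, rfl⟩ : ∃ L, ℓ = L + 1 := ⟨ℓ - 1, by omega⟩
  nlinarith

theorem hammingDist_lt_of_forall_hammingDist_le [Fintype α] {ℓ : ℕ} (hℓ : 1 ≤ ℓ)
    (hS : ℓ * (Fintype.card α - 1) + 2 ≤ #S)
    (hdist : ∀ c ∈ S, ∀ c' ∈ S, c ≠ c' → 2 * e + 1 ≤ hammingDist c c') {z y : ι → α}
    (hz : ∀ c ∈ S, hammingDist z c ≤ e + 1) (hy : ∀ c ∈ S, hammingDist y c ≤ e + ℓ) :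
    hammingDist z y < ℓ := by
  by_contra! hℓm
  have hinj : ∀ c ∈ S, ∀ c' ∈ S, ∀ k, z k ≠ c k → c k = c' k → c = c' :=
    fun c hc c' hc' _ => eq_of_ne_of_apply_eq hdist hz hc hc'
  have hdiff := sum_card_filter_le_hammingDist_mul S _ (z := z) (y := y) fun k _ =>
    card_filter_ne_apply_le hinj k
  have hagree := sum_card_filter_le_hammingDist_mul S _ (z := z) (y := y) fun _ hzy =>
    card_filter_apply_eq_le_one hinj hzy
  have hkey := fun c => hammingDist_add_card_add_card z y c
  -- Every codeword is at distance `e + 1` from `z`, except possibly one at distance `e`.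
  have hfar : ∀ c ∈ S, (if e < hammingDist z c then 1 else 0)
      ≤ #{k | z k ≠ y k ∧ z k ≠ c k} := by
    intro c hc
    have := hkey c
    have := card_filter_ne_and_eq_le z y c
    have := hz c hc
    have := hy c hc
    split_ifs <;> omega
  have hcount : #{c ∈ S | e < hammingDist z c} ≤ hammingDist z y * (Fintype.card α - 1) :=
    calc _ = ∑ c ∈ S, (if e < hammingDist z c then 1 else 0) := (sum_boole _ _).symm
      _ ≤ _ := sum_le_sum hfar
      _ ≤ _ := hdiff
  have hsum : ∑ c ∈ S, (hammingDist z y + (e + if e < hammingDist z c then 1 else 0))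
      ≤ ∑ c ∈ S, ((e + ℓ) + #{k | z k ≠ y k ∧ z k ≠ c k} + #{k | z k ≠ y k ∧ y k = c k}) :=
    sum_le_sum fun c hc => by
      have := le_hammingDist_of_one_lt_card (by omega) hdist hz hc
      have := hkey c
      have := hy c hc
      split_ifs <;> omega
  simp only [sum_add_distrib, sum_const, sum_boole, smul_eq_mul] at hsum
  exact not_le_of_incidence_bounds hℓ hS (card_le_card_filter_lt_hammingDist_add_one hdist z)
    hcount (by linarith) hℓm

end Centre

section Spread

variable {ι α : Type*} [Fintype ι] [DecidableEq ι] [DecidableEq α]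

theorem card_biUnion_filter_ne_le {x : ι → α} {S : Finset (ι → α)} (hx : x ∈ S) {r : ℕ}
    (h : ∀ c ∈ S, hammingDist x c ≤ r) :
    #(S.biUnion fun c => ({k | x k ≠ c k} : Finset ι)) ≤ (#S - 1) * r :=
  calc _ ≤ ∑ c ∈ S, #({k | x k ≠ c k} : Finset ι) := card_biUnion_le
    _ = ∑ c ∈ S.erase x, hammingDist x c := (sum_erase S (hammingDist_self x)).symm
    _ ≤ #(S.erase x) * r := sum_le_card_nsmul _ _ _ fun c hc => h c (mem_of_mem_erase hc)
    _ = (#S - 1) * r := by rw [card_erase_of_mem hx]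

theorem apply_eq_of_notMem_biUnion_filter_ne {x c : ι → α} {S : Finset (ι → α)} (hc : c ∈ S)
    {k : ι} (hk : k ∉ S.biUnion fun c => ({k | x k ≠ c k} : Finset ι)) : c k = x k := by
  by_contra hne
  exact hk (mem_biUnion.2 ⟨c, hc, mem_filter.2 ⟨mem_univ k, Ne.symm hne⟩⟩)

end Spread

section ListSize

variable {q n ℓ b : ℕ}

theorem pow_le_two_pow_mul_pred_pow (hq : 2 ≤ q) :
    q ^ b ≤ 2 ^ b * (q - 1) ^ (b - 1) * (q - 1) := by
  cases b with
  | zero => simp; omega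
  | succ b =>
    rw [Nat.add_sub_cancel, mul_assoc, ← pow_succ, ← mul_pow]
    exact Nat.pow_le_pow_left (by omega) _

theorem pow_mul_choose_le_succ (hq : 2 ≤ q)
    (hn : ℓ - 2 + (ℓ - 1) ^ 2 * 2 ^ b * (q - 1) ^ (b - 1) ≤ n) {i : ℕ} (hi : i + 2 ≤ ℓ) :
    q ^ b * ((q - 1) ^ i * n.choose i) ≤ (q - 1) ^ (i + 1) * n.choose (i + 1) := by
  have hratio : q ^ b * (i + 1) ≤ (q - 1) * (n - i) :=
    calc q ^ b * (i + 1) ≤ 2 ^ b * (q - 1) ^ (b - 1) * (q - 1) * (ℓ - 1) :=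
          Nat.mul_le_mul (pow_le_two_pow_mul_pred_pow hq) (by omega)
      _ ≤ 2 ^ b * (q - 1) ^ (b - 1) * (q - 1) * (ℓ - 1) ^ 2 :=
          Nat.mul_le_mul_left _ (Nat.le_self_pow two_ne_zero _)
      _ = (q - 1) * ((ℓ - 1) ^ 2 * 2 ^ b * (q - 1) ^ (b - 1)) := by ring
      _ ≤ (q - 1) * (n - i) := Nat.mul_le_mul_left _ (by omega)
  refine Nat.le_of_mul_le_mul_right ?_ (Nat.succ_pos i)
  calc q ^ b * ((q - 1) ^ i * n.choose i) * (i + 1)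
      = (q - 1) ^ i * n.choose i * (q ^ b * (i + 1)) := by ring
    _ ≤ (q - 1) ^ i * n.choose i * ((q - 1) * (n - i)) := Nat.mul_le_mul_left _ hratio
    _ = (q - 1) ^ (i + 1) * (n.choose i * (n - i)) := by ring
    _ = (q - 1) ^ (i + 1) * n.choose (i + 1) * (i + 1) := by
      rw [← Nat.choose_succ_right_eq]; ring

theorem pow_mul_sum_range_pred_le (hq : 2 ≤ q)
    (hn : ℓ - 2 + (ℓ - 1) ^ 2 * 2 ^ b * (q - 1) ^ (b - 1) ≤ n) :
    q ^ b * ∑ i ∈ range (ℓ - 1), (q - 1) ^ i * n.choose i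
      ≤ ∑ i ∈ range ℓ, (q - 1) ^ i * n.choose i := by
  cases ℓ with
  | zero => simp
  | succ k =>
    calc q ^ b * ∑ i ∈ range (k + 1 - 1), (q - 1) ^ i * n.choose i
        ≤ ∑ i ∈ range k, (q - 1) ^ (i + 1) * n.choose (i + 1) := by
          rw [Nat.add_sub_cancel, mul_sum]
          exact sum_le_sum fun i hi => pow_mul_choose_le_succ hq hn (by simp at hi; omega)
      _ ≤ ∑ i ∈ range (k + 1), (q - 1) ^ i * n.choose i := by
          rw [sum_range_succ' _ k]
          exact Nat.le_add_right _ _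

theorem card_le_of_forall_card_filter_ne_add_two_le (hq : 2 ≤ q)
    (hn : ℓ - 2 + (ℓ - 1) ^ 2 * 2 ^ b * (q - 1) ^ (b - 1) ≤ n) {Y : Finset (Fin n → Fin q)}
    {W : Finset (Fin n)} (hW : #W ≤ b) (w : Fin n → Fin q)
    (hY : ∀ y ∈ Y, #{k | k ∉ W ∧ y k ≠ w k} + 2 ≤ ℓ) :
    #Y ≤ ∑ i ∈ range ℓ, (q - 1) ^ i * n.choose i := by
  have hcount := card_le_of_forall_card_filter_ne_lt W w (s := ℓ - 1) fun y hy => by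
    have := hY y hy; omega
  simp only [Fintype.card_fin] at hcount
  calc #Y ≤ q ^ #W * ∑ i ∈ range (ℓ - 1), (q - 1) ^ i * n.choose i := hcount
    _ ≤ q ^ b * ∑ i ∈ range (ℓ - 1), (q - 1) ^ i * n.choose i :=
        Nat.mul_le_mul_right _ (Nat.pow_le_pow_right (by omega) hW)
    _ ≤ _ := pow_mul_sum_range_pred_le hq hn

theorem hammingDist_le_of_forall_hammingDist_le {e : ℕ} (hq : 2 ≤ q)
    (hn : ℓ - 2 + (ℓ - 1) ^ 2 * 2 ^ b * (q - 1) ^ (b - 1) ≤ n) (hb : 2 * (e + ℓ) ≤ b)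
    {Y : Finset (Fin n → Fin q)} (hY : ∑ i ∈ range ℓ, (q - 1) ^ i * n.choose i < #Y)
    {c c' : Fin n → Fin q} (hc : ∀ y ∈ Y, hammingDist c y ≤ e + ℓ)
    (hc' : ∀ y ∈ Y, hammingDist c' y ≤ e + ℓ) :
    hammingDist c c' ≤ 2 * e + 2 := by
  by_contra! hfar
  obtain ⟨y₀, hy₀⟩ := card_pos.1 (by omega : 0 < #Y)
  have hW : #({k | c k ≠ c' k} : Finset (Fin n)) ≤ b := by
    have := hammingDist_triangle c y₀ c'
    have := hc y₀ hy₀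
    have := hammingDist_comm y₀ c' ▸ hc' y₀ hy₀
    exact (show hammingDist c c' ≤ b by omega)
  refine absurd (card_le_of_forall_card_filter_ne_add_two_le hq hn hW c fun y hy => ?_) hY.not_ge
  have hoff : #{k | k ∉ ({k | c k ≠ c' k} : Finset (Fin n)) ∧ y k ≠ c k}
      = #{k | y k ≠ c k ∧ c k = c' k} := by
    congr 1
    ext k
    simp [and_comm]
  have := hammingDist_add_two_mul_card_le y c c'
  have := hammingDist_comm y c ▸ hc y hy
  have := hammingDist_comm y c' ▸ hc' y hy
  omega

theorem exists_forall_hammingDist_le_succ {e : ℕ} (hq : 2 ≤ q)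
    (hn : ℓ - 2 + (ℓ - 1) ^ 2 * 2 ^ b * (q - 1) ^ (b - 1) ≤ n)
    {Y : Finset (Fin n → Fin q)} (hY : ∑ i ∈ range ℓ, (q - 1) ^ i * n.choose i < #Y)
    {S : Finset (Fin n → Fin q)} {U : Finset (Fin n)} (hU : #U ≤ b) {x : Fin n → Fin q}
    (hagree : ∀ c ∈ S, ∀ k ∉ U, c k = x k) (hS : ∀ c ∈ S, ∀ y ∈ Y, hammingDist c y ≤ e + ℓ) :
    ∃ z, ∀ c ∈ S, hammingDist z c ≤ e + 1 := by
  by_contra! hno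
  refine absurd (card_le_of_forall_card_filter_ne_add_two_le hq hn hU x fun y hy => ?_) hY.not_ge
  obtain ⟨c, hc, hfar⟩ := hno (U.piecewise y x)
  have := hammingDist_eq_hammingDist_piecewise_add (hagree c hc) y
  have := hS c hc y hy
  omega

end ListSize

/-- Theorem "Listapituus": let `ℓ ≥ 1`, `q ≥ 3`, `t = e + ℓ`, `b ≥ (ℓ(q-1)+1)(2e+2)` and
`n ≥ ℓ-2 + (ℓ-1)²·2^b·(q-1)^{b-1}`. For any `e`-error-correcting code `C ⊆ (Z_q)^n` and any set
`Y` of at least `V_q(n,ℓ-1)+1` distinct output words obtained from a transmitted codeword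
`x ∈ C` by at most `t` substitutions per channel, the list size satisfies
`|T(Y)| ≤ ℓ(q-1)+1`. -/
theorem stmt13 (q n e ℓ t b : ℕ) (ht : t = e + ℓ) (hq : 3 ≤ q) (hl : 1 ≤ ℓ)
    (hb : (ℓ * (q - 1) + 1) * (2 * e + 2) ≤ b)
    (hn : ℓ - 2 + (ℓ - 1) ^ 2 * 2 ^ b * (q - 1) ^ (b - 1) ≤ n)
    (C : Finset (Fin n → Fin q))
    (hC : ∀ c1 ∈ C, ∀ c2 ∈ C, c1 ≠ c2 → 2 * e + 1 ≤ hammingDist c1 c2)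
    (Y : Finset (Fin n → Fin q))
    (hY : (∑ i ∈ Finset.range ℓ, (q - 1) ^ i * n.choose i) + 1 ≤ Y.card)
    (x : Fin n → Fin q) (hx : x ∈ C) (hxY : ∀ y ∈ Y, hammingDist x y ≤ t) :
    (C.filter (fun c => ∀ y ∈ Y, hammingDist c y ≤ t)).card ≤ ℓ * (q - 1) + 1 := by
  subst ht
  by_contra! hlarge
  have hq2 : 2 ≤ q := by omega
  obtain ⟨S, hxS, hSF, hS⟩ := exists_subsuperset_card_eq (n := ℓ * (q - 1) + 2)
    (singleton_subset_iff.2 (mem_filter.2 ⟨hx, hxY⟩)) (by simp) hlarge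
  have hSC : ∀ c ∈ S, c ∈ C := fun c hc => (mem_filter.1 (hSF hc)).1
  have hSY : ∀ c ∈ S, ∀ y ∈ Y, hammingDist c y ≤ e + ℓ := fun c hc => (mem_filter.1 (hSF hc)).2
  have hclose : ∀ c ∈ S, hammingDist x c ≤ 2 * e + 2 := fun c hc =>
    hammingDist_le_of_forall_hammingDist_le hq2 hn
      (by nlinarith [Nat.le_mul_of_pos_right ℓ (show 0 < q - 1 by omega)]) hY hxY (hSY c hc)
  have hU := card_biUnion_filter_ne_le (singleton_subset_iff.1 hxS) hclose
  obtain ⟨z, hz⟩ := exists_forall_hammingDist_le_succ hq2 hn hY (hU.trans (by rw [hS]; simpa))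
    (fun c hc k hk => apply_eq_of_notMem_biUnion_filter_ne hc hk) hSY
  have hball := card_le_of_forall_hammingDist_lt z (Y := Y) (s := ℓ) fun y hy =>
    hammingDist_lt_of_forall_hammingDist_le hl (by simp [hS])
      (fun c hc c' hc' => hC c (hSC c hc) c' (hSC c' hc')) hz
      (fun c hc => hammingDist_comm c y ▸ hSY c hc y hy)
  simp only [Fintype.card_fin] at hball
  omega
end
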